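/- arXiv:1407.5606 — 2 statements merged into one kernel-verified Lean document; each statement's English description precedes it below -/
import Mathlib

section
/- Fourier cutoff approximation, Sobolev bound on the Fourier side (Lemma 4.7, second bound): Let q∈W^{2,∞}(ℝ) be a symmetric cutoff function supported in [−1,1] with q(p)=1 for |p|≤1/2 and q'(p)≤0 for p>0. Let Q∈W^{2,∞}(ℝ²) be supported in [−L,L]², and for m∈ℕ define Q_m through its partial Fourier transform by Q̂_m(p,y) := Q̂(p,y)·q(p/m). Then there exists a constant C, depending only on L and q, such that for every m∈ℕ: ‖Q̂_m‖_{W^{2,∞}} ≤ C ‖Q‖_{W^{2,∞}}. -/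
/-!
Differentiating under the integral sign, every derivative of order at most two of
`Q̂_m(p,y) = ∫ e^{-ipx} Q(x,y) q(p/m) dx` is the integral over `x ∈ [-L,L]` of the same
derivative of the integrand. By the Leibniz rule that derivative is a combination of products of
derivatives of `e^{-ipx}` (at most `|x|^k ≤ (1+L)^2`), of `Q(x,·)` (at most `‖Q‖_{W^{2,∞}}`) and of
`q(·/m)` (at most `‖q‖_{W^{2,∞}}`, because `m ≥ 1` only shrinks them), so integrating over an
interval of length `2L` gives a constant depending on `L` and `q` alone.
-/

open MeasureTheory Filter
open scoped BigOperators

/-- The partial Fourier transform in the first variable: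
`Q̂(p,y) = ∫ Q(x,y) e^{-ipx} dx`. -/
noncomputable def partialFT (Q : ℝ → ℝ → ℝ) : ℝ × ℝ → ℂ :=
  fun py => ∫ x : ℝ, Complex.exp (-(Complex.I * (py.1 : ℂ) * (x : ℂ))) * (Q x py.2 : ℂ)

/-- The `W^{2,∞}` Sobolev norm: sum of the sup norms of the iterated derivatives
of order at most `2`. -/
noncomputable def sobNormTwo {E' F' : Type*} [NormedAddCommGroup E'] [NormedSpace ℝ E']
    [NormedAddCommGroup F'] [NormedSpace ℝ F'] (f : E' → F') : ℝ :=
  ∑ n ∈ Finset.range 3, ⨆ x, ‖iteratedFDeriv ℝ n f x‖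

open Function Set Complex

section IteratedFDeriv

variable {𝕜 : Type*} [NontriviallyNormedField 𝕜]
  {X E E' F : Type*} [NormedAddCommGroup X] [NormedSpace 𝕜 X] [NormedAddCommGroup E]
  [NormedSpace 𝕜 E] [NormedAddCommGroup E'] [NormedSpace 𝕜 E'] [NormedAddCommGroup F]
  [NormedSpace 𝕜 F]

theorem contDiff_uncurry_iteratedFDeriv {φ : X → E → F} {n : ℕ} (hφ : ContDiff 𝕜 n (uncurry φ))
    {k m : ℕ} (hkm : k + m ≤ n) : ContDiff 𝕜 m (uncurry fun x => iteratedFDeriv 𝕜 k (φ x)) := by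
  induction k generalizing m with
  | zero =>
    simp only [iteratedFDeriv_zero_eq_comp]
    exact (continuousMultilinearCurryFin0 𝕜 E F).symm.contDiff.comp
      (hφ.of_le (by exact_mod_cast (by omega)))
  | succ k ih =>
    have hψ : ContDiff 𝕜 (m + 1)
        (uncurry fun (w : X × E) => iteratedFDeriv 𝕜 k (φ w.1)) :=
      (ih (m := m + 1) (by omega)).comp (contDiff_fst.fst.prodMk contDiff_snd)
    exact (continuousMultilinearCurryLeftEquiv 𝕜 (fun _ : Fin (k + 1) => E) F).symm.contDiff.comp
      (hψ.fderiv contDiff_snd le_rfl)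

theorem ContinuousLinearMap.norm_iteratedFDeriv_comp_right_le {f : E' → F} {N : WithTop ℕ∞}
    (hf : ContDiff 𝕜 N f) (g : E →L[𝕜] E') (v : E) {k : ℕ} (hk : k ≤ N) :
    ‖iteratedFDeriv 𝕜 k (f ∘ g) v‖ ≤ ‖iteratedFDeriv 𝕜 k f (g v)‖ * ‖g‖ ^ k := by
  rw [g.iteratedFDeriv_comp_right hf v hk]
  exact (ContinuousMultilinearMap.norm_compContinuousLinearMap_le _ _).trans_eq (by simp)

theorem norm_iteratedFDeriv_mul_le_of_forall_le {A : Type*} [NormedRing A] [NormedAlgebra 𝕜 A]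
    {f g : E → A} {n : ℕ} (hf : ContDiff 𝕜 n f) (hg : ContDiff 𝕜 n g) {v : E} {a b : ℝ}
    (hfa : ∀ i ≤ n, ‖iteratedFDeriv 𝕜 i f v‖ ≤ a) (hgb : ∀ i ≤ n, ‖iteratedFDeriv 𝕜 i g v‖ ≤ b)
    {k : ℕ} (hk : k ≤ n) : ‖iteratedFDeriv 𝕜 k (fun y => f y * g y) v‖ ≤ 2 ^ n * a * b := by
  have ha : 0 ≤ a := (norm_nonneg _).trans (hfa 0 (Nat.zero_le n))
  have hb : 0 ≤ b := (norm_nonneg _).trans (hgb 0 (Nat.zero_le n))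
  calc ‖iteratedFDeriv 𝕜 k (fun y => f y * g y) v‖
      ≤ ∑ i ∈ Finset.range (k + 1), (k.choose i : ℝ) * ‖iteratedFDeriv 𝕜 i f v‖ *
          ‖iteratedFDeriv 𝕜 (k - i) g v‖ :=
        norm_iteratedFDeriv_mul_le hf hg v (by exact_mod_cast hk)
    _ ≤ ∑ i ∈ Finset.range (k + 1), (k.choose i : ℝ) * a * b := by
      gcongr with i hi
      · exact hfa i (by have := Finset.mem_range.mp hi; omega)
      · exact hgb (k - i) (by omega)
    _ = 2 ^ k * a * b := by
      rw [← Finset.sum_mul, ← Finset.sum_mul]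
      exact_mod_cast congrArg (fun t : ℕ => (t : ℝ) * a * b) (Nat.sum_range_choose k)
    _ ≤ 2 ^ n * a * b := by gcongr; norm_num

end IteratedFDeriv

theorem iteratedDeriv_cexp_ofReal_mul_I (k : ℕ) :
    iteratedDeriv k (fun t : ℝ => cexp (t * I)) = fun t : ℝ => I ^ k * cexp (t * I) := by
  induction k with
  | zero => simp
  | succ k ih =>
    funext t
    rw [iteratedDeriv_succ, ih]
    have h := (((hasDerivAt_id t).ofReal_comp.mul_const I).cexp).const_mul (I ^ k)
    simpa [pow_succ, mul_comm, mul_left_comm, mul_assoc] using h.deriv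

section ComplexValued

variable {E E' : Type*} [NormedAddCommGroup E] [NormedSpace ℝ E] [NormedAddCommGroup E']
  [NormedSpace ℝ E']

theorem norm_iteratedFDeriv_cexp_mul_I_le (ℓ : E →L[ℝ] ℝ) (k : ℕ) (v : E) :
    ‖iteratedFDeriv ℝ k (fun v => cexp (ℓ v * I)) v‖ ≤ ‖ℓ‖ ^ k := by
  have he : ContDiff ℝ ⊤ fun t : ℝ => cexp (t * I) :=
    contDiff_exp.comp (ofRealCLM.contDiff.mul contDiff_const)
  calc ‖iteratedFDeriv ℝ k ((fun t : ℝ => cexp (t * I)) ∘ ℓ) v‖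
      ≤ ‖iteratedFDeriv ℝ k (fun t : ℝ => cexp (t * I)) (ℓ v)‖ * ‖ℓ‖ ^ k :=
        ℓ.norm_iteratedFDeriv_comp_right_le he v (by exact_mod_cast le_top)
    _ = ‖ℓ‖ ^ k := by
        rw [norm_iteratedFDeriv_eq_norm_iteratedDeriv, iteratedDeriv_cexp_ofReal_mul_I]
        simp

theorem norm_iteratedFDeriv_ofReal_comp_le {f : E' → ℝ} {N : WithTop ℕ∞} (hf : ContDiff ℝ N f)
    (a : E') (g : E →L[ℝ] E') (hg : ‖g‖ ≤ 1) (v : E) {k : ℕ} (hk : k ≤ N) :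
    ‖iteratedFDeriv ℝ k (fun v => (f (a + g v) : ℂ)) v‖ ≤ ‖iteratedFDeriv ℝ k f (a + g v)‖ := by
  have hfa : ContDiff ℝ N fun w => f (a + w) := hf.comp (contDiff_const.add contDiff_id)
  calc ‖iteratedFDeriv ℝ k (ofRealLI ∘ (fun w => f (a + w)) ∘ g) v‖
      = ‖iteratedFDeriv ℝ k ((fun w => f (a + w)) ∘ g) v‖ :=
        ofRealLI.norm_iteratedFDeriv_comp_left (hfa.comp g.contDiff).contDiffAt hk
    _ ≤ ‖iteratedFDeriv ℝ k (fun w => f (a + w)) (g v)‖ * ‖g‖ ^ k :=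
        g.norm_iteratedFDeriv_comp_right_le hfa v hk
    _ ≤ ‖iteratedFDeriv ℝ k f (a + g v)‖ := by
        rw [iteratedFDeriv_comp_add_left]
        exact mul_le_of_le_one_right (norm_nonneg _) (pow_le_one₀ (norm_nonneg _) hg)

end ComplexValued

section SobolevNorm

variable {E F : Type*} [NormedAddCommGroup E] [NormedSpace ℝ E] [NormedAddCommGroup F]
  [NormedSpace ℝ F]

theorem sobNormTwo_nonneg (f : E → F) : 0 ≤ sobNormTwo f :=
  Finset.sum_nonneg fun _ _ => Real.iSup_nonneg fun _ => norm_nonneg _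

theorem norm_iteratedFDeriv_le_sobNormTwo {f : E → F} (hf : ContDiff ℝ 2 f)
    (hf_cpt : HasCompactSupport f) {k : ℕ} (hk : k ≤ 2) (v : E) :
    ‖iteratedFDeriv ℝ k f v‖ ≤ sobNormTwo f := by
  have hbdd : BddAbove (range fun w => ‖iteratedFDeriv ℝ k f w‖) :=
    (hf.continuous_iteratedFDeriv (by exact_mod_cast hk)).norm.bddAbove_range_of_hasCompactSupport
      (hf_cpt.iteratedFDeriv k).norm
  calc ‖iteratedFDeriv ℝ k f v‖ ≤ ⨆ w, ‖iteratedFDeriv ℝ k f w‖ := le_ciSup hbdd v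
    _ ≤ sobNormTwo f :=
      Finset.single_le_sum (f := fun n => ⨆ w, ‖iteratedFDeriv ℝ n f w‖)
        (fun _ _ => Real.iSup_nonneg fun _ => norm_nonneg _)
        (Finset.mem_range.mpr (by omega))

theorem sobNormTwo_le {f : E → F} {B : ℝ} (hB : ∀ k ≤ 2, ∀ v, ‖iteratedFDeriv ℝ k f v‖ ≤ B) :
    sobNormTwo f ≤ 3 * B := by
  calc sobNormTwo f ≤ ∑ _n ∈ Finset.range 3, B :=
        Finset.sum_le_sum fun n hn => ciSup_le (hB n (by simp at hn; omega))
    _ = 3 * B := by simp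

end SobolevNorm

section ParametricIntegral

variable {E F : Type*} [NormedAddCommGroup E] [NormedSpace ℝ E] [ProperSpace E]
  [NormedAddCommGroup F] [NormedSpace ℝ F] {φ : ℝ → E → F} {K : Set ℝ}

theorem hasFDerivAt_integral_of_contDiff (hφ : ContDiff ℝ 1 (uncurry φ)) (hK : IsCompact K)
    (hφK : ∀ x ∉ K, φ x = 0) (v₀ : E) :
    HasFDerivAt (fun v => ∫ x, φ x v) (∫ x, fderiv ℝ (φ x) v₀) v₀ := by
  have hφx : ∀ x, ContDiff ℝ 1 (φ x) := fun x => hφ.comp (contDiff_const.prodMk contDiff_id)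
  have hφv : ∀ v, Continuous fun x => φ x v := fun v =>
    hφ.continuous.comp (continuous_id.prodMk continuous_const)
  have hDφ : Continuous fun w : ℝ × E => fderiv ℝ (φ w.1) w.2 :=
    ((hφ.comp (contDiff_fst.fst.prodMk contDiff_snd)).fderiv (f := fun w : ℝ × E => φ w.1)
      contDiff_snd (zero_add 1).le).continuous
  obtain ⟨M, hM⟩ := (hK.prod (isCompact_closedBall v₀ 1)).exists_bound_of_continuousOn
    hDφ.continuousOn
  refine hasFDerivAt_integral_of_dominated_of_fderiv_le (F := fun v x => φ x v)
    (F' := fun v x => fderiv ℝ (φ x) v) (bound := K.indicator fun _ => M)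
    (Metric.ball_mem_nhds v₀ one_pos)
    (Eventually.of_forall fun v => (hφv v).aestronglyMeasurable)
    ((hφv v₀).integrable_of_hasCompactSupport
      (HasCompactSupport.intro hK fun x hx => by simp [hφK x hx]))
    (hDφ.comp (continuous_id.prodMk continuous_const)).aestronglyMeasurable
    (ae_of_all _ fun x v hv => ?_)
    ((integrableOn_const hK.measure_lt_top.ne).integrable_indicator hK.measurableSet)
    (ae_of_all _ fun x v _ => ((hφx x).differentiable one_ne_zero v).hasFDerivAt)
  by_cases hx : x ∈ K
  · rw [indicator_of_mem hx]
    exact hM (x, v) ⟨hx, Metric.ball_subset_closedBall hv⟩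
  · rw [indicator_of_notMem hx, hφK x hx]
    simp

theorem iteratedFDeriv_integral_of_contDiff {n : ℕ} (hφ : ContDiff ℝ n (uncurry φ))
    (hK : IsCompact K) (hφK : ∀ x ∉ K, φ x = 0) {k : ℕ} (hk : k ≤ n) :
    iteratedFDeriv ℝ k (fun v => ∫ x, φ x v) = fun v => ∫ x, iteratedFDeriv ℝ k (φ x) v := by
  induction k with
  | zero =>
    funext v
    simp only [iteratedFDeriv_zero_eq_comp, comp_apply]
    exact ((continuousMultilinearCurryFin0 ℝ E F).symm.toContinuousLinearEquiv.integral_comp_comm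
      _).symm
  | succ k ih =>
    funext v
    rw [iteratedFDeriv_succ_eq_comp_left, comp_apply, ih (by omega),
      (hasFDerivAt_integral_of_contDiff (contDiff_uncurry_iteratedFDeriv hφ (by omega)) hK
        (fun x hx => by simp [hφK x hx]) v).fderiv]
    exact (ContinuousLinearEquiv.integral_comp_comm (𝕜 := ℝ) (μ := (volume : Measure ℝ))
      (E := E →L[ℝ] E [×k]→L[ℝ] F) (F := E [×k + 1]→L[ℝ] F)
      (continuousMultilinearCurryLeftEquiv ℝ (fun _ : Fin (k + 1) => E)
        F).symm.toContinuousLinearEquiv _).symm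

theorem norm_iteratedFDeriv_integral_le {n : ℕ} (hφ : ContDiff ℝ n (uncurry φ))
    (hK : IsCompact K) (hφK : ∀ x ∉ K, φ x = 0) {k : ℕ} (hk : k ≤ n) (v : E) {B : ℝ}
    (hB : ∀ x ∈ K, ‖iteratedFDeriv ℝ k (φ x) v‖ ≤ B) :
    ‖iteratedFDeriv ℝ k (fun v => ∫ x, φ x v) v‖ ≤ B * volume.real K := by
  rw [iteratedFDeriv_integral_of_contDiff hφ hK hφK hk]
  dsimp only
  rw [← setIntegral_eq_integral_of_forall_compl_eq_zero fun x hx => by simp [hφK x hx]]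
  exact norm_setIntegral_le_of_norm_le_const hK.measure_lt_top hB

end ParametricIntegral

noncomputable def cutoffIntegrand (q : ℝ → ℝ) (Q : ℝ × ℝ → ℝ) (m x : ℝ) (v : ℝ × ℝ) : ℂ :=
  cexp (-(I * v.1 * x)) * ((Q (x, v.2) : ℂ) * (q (v.1 / m) : ℂ))

theorem partialFT_mul_eq_integral_cutoffIntegrand (Q : ℝ → ℝ → ℝ) (q : ℝ → ℝ) (m : ℝ)
    (v : ℝ × ℝ) :
    partialFT Q v * (q (v.1 / m) : ℂ) =
      ∫ x, cutoffIntegrand q (fun w => Q w.1 w.2) m x v := by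
  simp only [partialFT, cutoffIntegrand, ← integral_mul_const, mul_assoc]

section Cutoff

variable {q : ℝ → ℝ} {Q : ℝ × ℝ → ℝ}

theorem cutoffIntegrand_eq_zero {s t : Set ℝ} (hQ : support Q ⊆ s ×ˢ t) (m : ℝ) {x : ℝ}
    (hx : x ∉ s) : cutoffIntegrand q Q m x = 0 := by
  funext v
  have : Q (x, v.2) = 0 := notMem_support.mp fun h => hx (hQ h).1
  simp [cutoffIntegrand, this]

theorem contDiff_uncurry_cutoffIntegrand {n : WithTop ℕ∞} (hq : ContDiff ℝ n q)
    (hQ : ContDiff ℝ n Q) (m : ℝ) : ContDiff ℝ n (uncurry (cutoffIntegrand q Q m)) := by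
  unfold cutoffIntegrand uncurry
  have hofReal : ContDiff ℝ n ofReal := ofRealCLM.contDiff
  refine (contDiff_exp.comp ?_).mul ((hofReal.comp ?_).mul (hofReal.comp ?_))
  · exact ((contDiff_const.mul (hofReal.comp contDiff_snd.fst)).mul (hofReal.comp contDiff_fst)).neg
  · exact hQ.comp (contDiff_fst.prodMk contDiff_snd.snd)
  · exact hq.comp (contDiff_snd.fst.div_const m)

theorem norm_iteratedFDeriv_cexp_phase_le (x : ℝ) (i : ℕ) (v : ℝ × ℝ) :
    ‖iteratedFDeriv ℝ i (fun v : ℝ × ℝ => cexp (-(I * v.1 * x))) v‖ ≤ |x| ^ i := by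
  have hphase : (fun v : ℝ × ℝ => cexp (-(I * v.1 * x))) =
      fun v => cexp ((-x • ContinuousLinearMap.fst ℝ ℝ ℝ) v * I) := by
    funext v
    simp only [FunLike.coe_smul, Pi.smul_apply, ContinuousLinearMap.coe_fst',
      smul_eq_mul]
    push_cast
    ring_nf
  have hℓ : ‖-x • ContinuousLinearMap.fst ℝ ℝ ℝ‖ ≤ |x| :=
    calc ‖-x • ContinuousLinearMap.fst ℝ ℝ ℝ‖ ≤ ‖-x‖ * ‖ContinuousLinearMap.fst ℝ ℝ ℝ‖ :=
          ContinuousLinearMap.opNorm_smul_le _ _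
      _ ≤ |x| * 1 := by
          rw [norm_neg, Real.norm_eq_abs]
          gcongr
          exact ContinuousLinearMap.norm_fst_le ℝ ℝ ℝ
      _ = |x| := mul_one _
  rw [hphase]
  exact (norm_iteratedFDeriv_cexp_mul_I_le _ i v).trans (pow_le_pow_left₀ (norm_nonneg _) hℓ i)

theorem norm_iteratedFDeriv_ofReal_slice_le {N : WithTop ℕ∞} (hQ : ContDiff ℝ N Q) (x : ℝ)
    (v : ℝ × ℝ) {i : ℕ} (hi : i ≤ N) :
    ‖iteratedFDeriv ℝ i (fun v : ℝ × ℝ => (Q (x, v.2) : ℂ)) v‖ ≤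
      ‖iteratedFDeriv ℝ i Q (x, v.2)‖ := by
  have hslice : ∀ v : ℝ × ℝ,
      (x, 0) + (0 : ℝ × ℝ →L[ℝ] ℝ).prod (ContinuousLinearMap.snd ℝ ℝ ℝ) v = (x, v.2) :=
    fun v => by simp
  simp_rw [← hslice]
  refine norm_iteratedFDeriv_ofReal_comp_le hQ _ _ ?_ v hi
  rw [ContinuousLinearMap.opNorm_prod, Prod.norm_def]
  simp

theorem norm_iteratedFDeriv_ofReal_comp_div_le {N : WithTop ℕ∞} (hq : ContDiff ℝ N q) {m : ℝ}
    (hm : 1 ≤ m) (v : ℝ × ℝ) {i : ℕ} (hi : i ≤ N) :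
    ‖iteratedFDeriv ℝ i (fun v : ℝ × ℝ => (q (v.1 / m) : ℂ)) v‖ ≤
      ‖iteratedFDeriv ℝ i q (v.1 / m)‖ := by
  have hscale : ∀ v : ℝ × ℝ, 0 + (m⁻¹ • ContinuousLinearMap.fst ℝ ℝ ℝ) v = v.1 / m :=
    fun v => by simp [div_eq_inv_mul]
  simp_rw [← hscale]
  refine norm_iteratedFDeriv_ofReal_comp_le hq _ _ ?_ v hi
  refine (ContinuousLinearMap.opNorm_smul_le _ _).trans
    (mul_le_one₀ ?_ (norm_nonneg _) (ContinuousLinearMap.norm_fst_le ℝ ℝ ℝ))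
  rw [norm_inv, Real.norm_of_nonneg (by linarith)]
  exact inv_le_one_of_one_le₀ hm

theorem norm_iteratedFDeriv_cutoffIntegrand_le (hq : ContDiff ℝ 2 q)
    (hq_cpt : HasCompactSupport q) (hQ : ContDiff ℝ 2 Q) (hQ_cpt : HasCompactSupport Q) {m : ℝ}
    (hm : 1 ≤ m) (x : ℝ) (v : ℝ × ℝ) {k : ℕ} (hk : k ≤ 2) :
    ‖iteratedFDeriv ℝ k (cutoffIntegrand q Q m x) v‖ ≤
      2 ^ 2 * (1 + |x|) ^ 2 * (2 ^ 2 * sobNormTwo Q * sobNormTwo q) := by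
  have hexp (i : ℕ) (hi : i ≤ 2) :
      ‖iteratedFDeriv ℝ i (fun v : ℝ × ℝ => cexp (-(I * v.1 * x))) v‖ ≤ (1 + |x|) ^ 2 :=
    calc _ ≤ |x| ^ i := norm_iteratedFDeriv_cexp_phase_le x i v
      _ ≤ (1 + |x|) ^ i := pow_le_pow_left₀ (abs_nonneg x) (by linarith) i
      _ ≤ (1 + |x|) ^ 2 := pow_le_pow_right₀ (by linarith [abs_nonneg x]) hi
  have hQx (i : ℕ) (hi : i ≤ 2) :
      ‖iteratedFDeriv ℝ i (fun v : ℝ × ℝ => (Q (x, v.2) : ℂ)) v‖ ≤ sobNormTwo Q :=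
    (norm_iteratedFDeriv_ofReal_slice_le hQ x v (by exact_mod_cast hi)).trans
      (norm_iteratedFDeriv_le_sobNormTwo hQ hQ_cpt hi _)
  have hqm (i : ℕ) (hi : i ≤ 2) :
      ‖iteratedFDeriv ℝ i (fun v : ℝ × ℝ => (q (v.1 / m) : ℂ)) v‖ ≤ sobNormTwo q :=
    (norm_iteratedFDeriv_ofReal_comp_div_le hq hm v (by exact_mod_cast hi)).trans
      (norm_iteratedFDeriv_le_sobNormTwo hq hq_cpt hi _)
  have hofReal : ContDiff ℝ 2 ofReal := ofRealCLM.contDiff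
  have hexp' : ContDiff ℝ 2 fun v : ℝ × ℝ => cexp (-(I * v.1 * x)) :=
    contDiff_exp.comp ((contDiff_const.mul (hofReal.comp contDiff_fst)).mul contDiff_const).neg
  have hQx' : ContDiff ℝ 2 fun v : ℝ × ℝ => (Q (x, v.2) : ℂ) :=
    hofReal.comp (hQ.comp (contDiff_const.prodMk contDiff_snd))
  have hqm' : ContDiff ℝ 2 fun v : ℝ × ℝ => (q (v.1 / m) : ℂ) :=
    hofReal.comp (hq.comp (contDiff_fst.div_const m))
  exact norm_iteratedFDeriv_mul_le_of_forall_le hexp' (hQx'.mul hqm') hexp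
    (fun i hi => norm_iteratedFDeriv_mul_le_of_forall_le hQx' hqm' hQx hqm hi) hk

end Cutoff

theorem fourier_cutoff_sobolev_general
    (q : ℝ → ℝ) (hq : ContDiff ℝ 2 q)
    (hq_supp : Function.support q ⊆ Set.Icc (-1 : ℝ) 1)
    (L : ℝ) (hL : 0 < L) :
    ∃ C > (0 : ℝ), ∀ Q : ℝ → ℝ → ℝ,
      ContDiff ℝ 2 (fun v : ℝ × ℝ => Q v.1 v.2) →
      Function.support (fun v : ℝ × ℝ => Q v.1 v.2) ⊆
        Set.Icc (-L) L ×ˢ Set.Icc (-L) L →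
      ∀ m : ℕ, 1 ≤ m →
        sobNormTwo (fun py : ℝ × ℝ => partialFT Q py * (q (py.1 / m) : ℂ))
          ≤ C * sobNormTwo (fun v : ℝ × ℝ => Q v.1 v.2) := by
  have hq_cpt := HasCompactSupport.of_support_subset_isCompact isCompact_Icc hq_supp
  have hc := sobNormTwo_nonneg q
  refine ⟨3 * (2 ^ 2 * (1 + L) ^ 2 * (2 ^ 2 * (sobNormTwo q + 1))) * (2 * L), by positivity, ?_⟩
  intro Q hQ hQ_supp m hm
  have hQ_cpt :=
    HasCompactSupport.of_support_subset_isCompact (isCompact_Icc.prod isCompact_Icc) hQ_supp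
  set S := sobNormTwo fun v : ℝ × ℝ => Q v.1 v.2
  have hS : 0 ≤ S := sobNormTwo_nonneg _
  have hintegrand : ∀ k ≤ 2, ∀ v, ∀ x ∈ Icc (-L) L,
      ‖iteratedFDeriv ℝ k (cutoffIntegrand q (fun v => Q v.1 v.2) m x) v‖ ≤
        2 ^ 2 * (1 + L) ^ 2 * (2 ^ 2 * S * sobNormTwo q) := fun k hk v x hx =>
    (norm_iteratedFDeriv_cutoffIntegrand_le hq hq_cpt hQ hQ_cpt (by exact_mod_cast hm) x v hk).trans
      (by gcongr; exact abs_le.mpr hx)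
  simp_rw [partialFT_mul_eq_integral_cutoffIntegrand]
  refine (sobNormTwo_le fun k hk v => norm_iteratedFDeriv_integral_le
    (contDiff_uncurry_cutoffIntegrand hq hQ m) isCompact_Icc
    (fun x hx => cutoffIntegrand_eq_zero hQ_supp m hx) hk v (hintegrand k hk v)).trans ?_
  rw [Real.volume_real_Icc_of_le (by linarith)]
  calc _ = 3 * (2 ^ 2 * (1 + L) ^ 2 * (2 ^ 2 * sobNormTwo q)) * (2 * L) * S := by ring
    _ ≤ _ := by gcongr; linarith

/-- **Fourier cutoff approximation, Sobolev bound on the Fourier side** (Lemma 4.7, second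
bound).  For a fixed smooth cutoff `q` (supported in `[-1,1]`, symmetric, `≡ 1` on
`[-1/2,1/2]`, nonincreasing on the right half line) and any `L > 0`, there is
`C = C(L,q) > 0` such that for every `Q ∈ W^{2,∞}(ℝ²)` supported in `[-L,L]²` and every
`m ≥ 1`, the partial Fourier transform `Q̂_m(p,y) = Q̂(p,y) q(p/m)` satisfies
`‖Q̂_m‖_{W^{2,∞}} ≤ C ‖Q‖_{W^{2,∞}}`. -/
theorem fourier_cutoff_sobolev
    (q : ℝ → ℝ) (hq : ContDiff ℝ 2 q)
    (hq_supp : Function.support q ⊆ Set.Icc (-1 : ℝ) 1)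
    (hq_symm : ∀ p : ℝ, q (-p) = q p)
    (hq_one : ∀ p : ℝ, |p| ≤ 1 / 2 → q p = 1)
    (hq_mono : ∀ p : ℝ, 0 < p → deriv q p ≤ 0)
    (L : ℝ) (hL : 0 < L) :
    ∃ C > (0 : ℝ), ∀ Q : ℝ → ℝ → ℝ,
      ContDiff ℝ 2 (fun v : ℝ × ℝ => Q v.1 v.2) →
      Function.support (fun v : ℝ × ℝ => Q v.1 v.2) ⊆
        Set.Icc (-L) L ×ˢ Set.Icc (-L) L →
      ∀ m : ℕ, 1 ≤ m →
        sobNormTwo (fun py : ℝ × ℝ => partialFT Q py * (q (py.1 / m) : ℂ))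
          ≤ C * sobNormTwo (fun v : ℝ × ℝ => Q v.1 v.2) :=
  fourier_cutoff_sobolev_general q hq hq_supp L hL
end

section
/- Chebyshev difference-quotient identity against the semicircle law (equation (3.12) of the paper): For every integer n≥1 and every x∈ℝ, ∫_{−2}^2 (P_n(x)−P_n(y))/(x−y) · ρ(y) dy = P_{n−1}(x), where P_n(x)=U_n(x/2) with U_n the Chebyshev polynomial of the second kind. (The integrand extends to a polynomial in y, so the integral is absolutely convergent; for n=0 the left-hand side is 0.) -/
/-
Telescoping the three-term recurrence gives
`P_n(x) - P_n(y) = (x - y) * ∑_{j<n} P_j(x) P_{n-1-j}(y)`, so the difference quotient is a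
polynomial in `y`. Under `y = 2 cos θ` the semicircle law becomes `(2/π) sin² θ dθ` and
`P_m(2 cos θ) sin θ = sin((m+1)θ)`, so `∫ P_m ρ = δ_{m0}` and only the term `j = n - 1` survives.
-/

open MeasureTheory

/-- The semicircle density. -/
noncomputable def semicircle (x : ℝ) : ℝ := Real.sqrt (max (4 - x ^ 2) 0) / (2 * Real.pi)

/-- The rescaled Chebyshev polynomials of the second kind, `P_n(x) = U_n(x/2)`. -/
noncomputable def chebP (n : ℕ) (x : ℝ) : ℝ :=
  (Polynomial.Chebyshev.U ℝ (n : ℤ)).eval (x / 2)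

namespace Polynomial.Chebyshev

variable {R : Type*} [CommRing R]

theorem eval_U_add_one_add_eval_U_sub_one (m : ℤ) (a : R) :
    (U R (m + 1)).eval a + (U R (m - 1)).eval a = 2 * a * (U R m).eval a := by
  simp [U_add_one]

theorem eval_U_sub_eval_U (n : ℕ) (a b : R) :
    (U R n).eval a - (U R n).eval b =
      2 * (a - b) * ∑ j ∈ Finset.range n, (U R j).eval a * (U R ↑(n - 1 - j)).eval b := by
  -- `W (j + 1) - W j` is the `j`-th summand, by the three-term recurrence at `a` and at `b`.
  let W : ℤ → R := fun m =>
    (U R m).eval a * (U R (n - m)).eval b - (U R (m - 1)).eval a * (U R (n - m - 1)).eval b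
  have hstep (j : ℕ) (hj : j < n) : W (j + 1) - W j =
      2 * (a - b) * ((U R j).eval a * (U R ↑(n - 1 - j)).eval b) := by
    have hk : ((n - 1 - j : ℕ) : ℤ) = n - j - 1 := by omega
    have hA := eval_U_add_one_add_eval_U_sub_one (j : ℤ) a
    have hB := eval_U_add_one_add_eval_U_sub_one ((n : ℤ) - j - 1) b
    simp only [W, hk, add_sub_cancel_right, sub_add_cancel, sub_add_eq_sub_sub] at hA hB ⊢
    linear_combination (U R (n - j - 1)).eval b * hA - (U R j).eval a * hB
  have hsum := Finset.sum_range_sub (fun j : ℕ => W j) n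
  rw [Finset.mul_sum, ← Finset.sum_congr rfl fun j hj => hstep j (Finset.mem_range.mp hj)]
  push_cast at hsum
  rw [hsum]
  simp [W]

end Polynomial.Chebyshev

open Real Polynomial.Chebyshev

theorem chebP_sub_chebP (n : ℕ) (x y : ℝ) :
    chebP n x - chebP n y = (x - y) * ∑ j ∈ Finset.range n, chebP j x * chebP (n - 1 - j) y := by
  simp only [chebP, eval_U_sub_eval_U]
  ring

theorem continuous_chebP (n : ℕ) : Continuous (chebP n) := by
  unfold chebP
  fun_prop

theorem continuous_semicircle : Continuous semicircle := by
  unfold semicircle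
  fun_prop

theorem chebP_two_mul_cos_mul_sin (n : ℕ) (θ : ℝ) :
    chebP n (2 * cos θ) * sin θ = sin ((n + 1) * θ) := by
  simp [chebP, U_real_cos]

theorem semicircle_two_mul_cos {θ : ℝ} (hθ : θ ∈ Set.Icc 0 π) :
    semicircle (2 * cos θ) = sin θ / π := by
  have hsin : 0 ≤ sin θ := sin_nonneg_of_nonneg_of_le_pi hθ.1 hθ.2
  have h : max (4 - (2 * cos θ) ^ 2) 0 = (2 * sin θ) ^ 2 := by
    rw [max_eq_left] <;> nlinarith [sin_sq_add_cos_sq θ]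
  rw [semicircle, h, sqrt_sq (by positivity)]
  field_simp

theorem integral_Ioo_neg_two_two_eq_integral_cos (f : ℝ → ℝ) :
    ∫ y in Set.Ioo (-2 : ℝ) 2, f y = ∫ θ in 0..π, f (2 * cos θ) * (2 * sin θ) := by
  have hsubst := intervalIntegral.integral_comp_mul_deriv_of_deriv_nonpos (a := 0) (b := π)
    (f := fun θ => 2 * cos θ) (f' := fun θ => -(2 * sin θ)) (g := f) (by fun_prop)
    (fun θ _ => by simpa using (hasDerivAt_cos θ).const_mul (2 : ℝ))
    (fun θ hθ => by
      simp only [pi_pos.le, min_eq_left, max_eq_right] at hθ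
      linarith [sin_pos_of_pos_of_lt_pi hθ.1 hθ.2])
  simp only [cos_zero, cos_pi, Function.comp_apply, mul_neg, mul_one,
    intervalIntegral.integral_neg] at hsubst
  rw [← integral_Ioc_eq_integral_Ioo, ← intervalIntegral.integral_of_le (by norm_num),
    intervalIntegral.integral_symm, ← hsubst, neg_neg]

theorem integral_cos_nat_mul (k : ℕ) :
    ∫ θ in 0..π, cos (k * θ) = if k = 0 then π else 0 := by
  split_ifs with hk
  · simp [hk]
  · rw [intervalIntegral.integral_comp_mul_left cos (Nat.cast_ne_zero.mpr hk)]
    simp [integral_cos, sin_nat_mul_pi]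

theorem integral_chebP_mul_semicircle (m : ℕ) :
    ∫ y in Set.Ioo (-2 : ℝ) 2, chebP m y * semicircle y = if m = 0 then 1 else 0 := by
  have hpt : ∀ θ ∈ Set.uIcc 0 π, chebP m (2 * cos θ) * semicircle (2 * cos θ) * (2 * sin θ) =
      (cos (m * θ) - cos ((m + 2 : ℕ) * θ)) / π := by
    intro θ hθ
    rw [Set.uIcc_of_le pi_pos.le] at hθ
    have hm : cos (m * θ) = cos ((m + 1) * θ - θ) := by ring_nf
    have hm2 : cos ((m + 2 : ℕ) * θ) = cos ((m + 1) * θ + θ) := by push_cast; ring_nf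
    rw [semicircle_two_mul_cos hθ, hm, hm2, cos_sub, cos_add, ← chebP_two_mul_cos_mul_sin]
    ring
  have hint (k : ℕ) : IntervalIntegrable (fun θ => cos (k * θ)) volume 0 π :=
    (by fun_prop : Continuous fun θ => cos (k * θ)).intervalIntegrable 0 π
  rw [integral_Ioo_neg_two_two_eq_integral_cos, intervalIntegral.integral_congr hpt,
    intervalIntegral.integral_div, intervalIntegral.integral_sub (hint m) (hint (m + 2)),
    integral_cos_nat_mul, integral_cos_nat_mul]
  split_ifs <;> simp_all [pi_ne_zero]

/-- **Chebyshev difference-quotient identity against the semicircle law** (equation (3.12)).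
For every `n ≥ 1` and every `x ∈ ℝ`,
`∫_{-2}^{2} (P_n(x) - P_n(y))/(x - y) ρ(y) dy = P_{n-1}(x)`.
(The integrand coincides a.e. with the polynomial divided difference of `P_n`, so the
integral is absolutely convergent.) -/
theorem chebyshev_difference_quotient (n : ℕ) (hn : 1 ≤ n) (x : ℝ) :
    ∫ y in Set.Ioo (-2 : ℝ) 2, (chebP n x - chebP n y) / (x - y) * semicircle y
      = chebP (n - 1) x := by
  have hae : ∀ᵐ y ∂volume.restrict (Set.Ioo (-2 : ℝ) 2),
      (chebP n x - chebP n y) / (x - y) * semicircle y =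
        ∑ j ∈ Finset.range n, chebP j x * (chebP (n - 1 - j) y * semicircle y) := by
    filter_upwards [ae_restrict_of_ae (volume.ae_ne x)] with y hy
    rw [chebP_sub_chebP, mul_div_cancel_left₀ _ (sub_ne_zero.mpr hy.symm), Finset.sum_mul]
    simp only [mul_assoc]
  have hint (j : ℕ) :
      Integrable (fun y => chebP j x * (chebP (n - 1 - j) y * semicircle y))
        (volume.restrict (Set.Ioo (-2 : ℝ) 2)) :=
    (continuous_const.mul ((continuous_chebP _).mul continuous_semicircle)).integrableOn_Icc
      |>.mono_set Set.Ioo_subset_Icc_self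
  calc ∫ y in Set.Ioo (-2 : ℝ) 2, (chebP n x - chebP n y) / (x - y) * semicircle y
      = ∑ j ∈ Finset.range n,
          chebP j x * ∫ y in Set.Ioo (-2 : ℝ) 2, chebP (n - 1 - j) y * semicircle y := by
        rw [integral_congr_ae hae, integral_finsetSum _ fun j _ => hint j]
        simp only [integral_const_mul]
    _ = chebP (n - 1) x := by
        simp only [integral_chebP_mul_semicircle, mul_ite, mul_one, mul_zero]
        rw [Finset.sum_eq_single_of_mem (n - 1) (Finset.mem_range.mpr (by omega))
          fun j hj hne => if_neg (by grind), if_pos (Nat.sub_self _)]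
end
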